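/- Fix Δ > 0, R_FEC ∈ (0,1], real numbers W_1,…,W_M, R_u, R_bf, a power budget P_j > 0, set D = (1−R_FEC)·R_u − R_bf, and let η > 0. Define the case-1 (Gibbs) probability vector p*_i = 2^{−ηΔi} / ∑_{i'=1}^M 2^{−ηΔi'}. Assume the two conditions of Lemma 1, case 1: (c1^p) ∑_{i=1}^M (R_FEC·Δ·i − P_j)·2^{−ηΔi} = 0 and (c1^r) ∑_{i=1}^M (R_FEC·W_i − D)·2^{−ηΔi} < 0. Then p* is feasible for the convexified rate-adaptation problem — it satisfies the power equality R_FEC ∑_{i=1}^M Δ·i·p*_i = P_j and the strict rate constraint T(p*) < Φ(p*) − R_bf — and it is optimal: every probability vector q on {1,…,M} satisfying R_FEC ∑_{i=1}^M Δ·i·q_i = P_j and T(q) ≤ Φ(q) − R_bf has T(q) ≤ T(p*). -/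

import Mathlib

/-!
The power equality pins the mean energy `∑ Δ i pᵢ`, and the Gibbs vector `p* ∝ 2^{-ηΔi}` has
`log₂ p*ᵢ` affine in the energy `Δ i`. Hence the cross entropy `-∑ qᵢ log₂ p*ᵢ` is the same for
every probability vector `q` with that mean energy, namely `H(p*)`, and Gibbs' inequality
`H(q) ≤ -∑ qᵢ log₂ p*ᵢ` gives `H(q) ≤ H(p*)`. Feasibility of `p*` is the conditions `c1p`, `c1r`
divided by the partition function.
-/

open Finset Real

variable {ι : Type*}

lemma mul_log_le_mul_log_add_sub {p q : ℝ} (hp : 0 < p) (hq : 0 ≤ q) :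
    q * log p ≤ q * log q + (p - q) := by
  rcases hq.eq_or_lt with rfl | hq
  · simpa using hp.le
  have hlog : log p - log q ≤ p / q - 1 := by
    rw [← log_div hp.ne' hq.ne']
    exact log_le_sub_one_of_pos (div_pos hp hq)
  calc q * log p = q * log q + q * (log p - log q) := by ring
    _ ≤ q * log q + q * (p / q - 1) := by gcongr
    _ = q * log q + (p - q) := by field_simp

lemma sum_mul_logb_le_sum_mul_logb {b : ℝ} (hb : 1 < b) {s : Finset ι} {p q : ι → ℝ}
    (hp : ∀ i ∈ s, 0 < p i) (hq : ∀ i ∈ s, 0 ≤ q i) (hsum : ∑ i ∈ s, p i ≤ ∑ i ∈ s, q i) :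
    ∑ i ∈ s, q i * logb b (p i) ≤ ∑ i ∈ s, q i * logb b (q i) := by
  have hlog : ∑ i ∈ s, q i * log (p i) ≤ ∑ i ∈ s, q i * log (q i) := by
    have := sum_le_sum fun i hi ↦ mul_log_le_mul_log_add_sub (hp i hi) (hq i hi)
    rw [sum_add_distrib, sum_sub_distrib] at this
    linarith
  simp only [logb, mul_div_assoc', ← sum_div]
  exact div_le_div_of_nonneg_right hlog (log_pos hb).le

section Gibbs

variable (s : Finset ι) (β : ℝ) (E : ι → ℝ)

noncomputable def partitionFunction : ℝ := ∑ j ∈ s, (2 : ℝ) ^ (-(β * E j))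

noncomputable def gibbs (i : ι) : ℝ := (2 : ℝ) ^ (-(β * E i)) / partitionFunction s β E

variable {s}

lemma partitionFunction_pos (hs : s.Nonempty) : 0 < partitionFunction s β E :=
  sum_pos (fun _ _ ↦ rpow_pos_of_pos two_pos _) hs

lemma gibbs_pos (hs : s.Nonempty) (i : ι) : 0 < gibbs s β E i :=
  div_pos (rpow_pos_of_pos two_pos _) (partitionFunction_pos β E hs)

lemma sum_gibbs (hs : s.Nonempty) : ∑ i ∈ s, gibbs s β E i = 1 := by
  simp only [gibbs]
  rw [← sum_div, ← partitionFunction, div_self (partitionFunction_pos β E hs).ne']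

lemma logb_gibbs (hs : s.Nonempty) (i : ι) :
    logb 2 (gibbs s β E i) = -(β * E i) - logb 2 (partitionFunction s β E) := by
  rw [gibbs, logb_div (rpow_pos_of_pos two_pos _).ne' (partitionFunction_pos β E hs).ne',
    logb_rpow two_pos (by norm_num)]

lemma sum_mul_logb_gibbs (hs : s.Nonempty) (q : ι → ℝ) :
    ∑ i ∈ s, q i * logb 2 (gibbs s β E i)
      = -β * ∑ i ∈ s, E i * q i - logb 2 (partitionFunction s β E) * ∑ i ∈ s, q i := by
  simp only [logb_gibbs β E hs, mul_sum, ← sum_sub_distrib]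
  exact sum_congr rfl fun i _ ↦ by ring

lemma sum_sub_mul_rpow_eq (hs : s.Nonempty) (a : ι → ℝ) (c : ℝ) :
    ∑ i ∈ s, (a i - c) * (2 : ℝ) ^ (-(β * E i))
      = (∑ i ∈ s, a i * gibbs s β E i - c) * partitionFunction s β E := by
  have hmean : ∑ i ∈ s, a i * gibbs s β E i
      = (∑ i ∈ s, a i * (2 : ℝ) ^ (-(β * E i))) / partitionFunction s β E := by
    simp only [gibbs, mul_div_assoc', sum_div]
  rw [hmean, sub_mul, div_mul_cancel₀ _ (partitionFunction_pos β E hs).ne', partitionFunction,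
    mul_sum, ← sum_sub_distrib]
  exact sum_congr rfl fun i _ ↦ by ring

lemma sum_mul_gibbs_eq_of_sum_sub_mul_rpow_eq_zero (hs : s.Nonempty) {a : ι → ℝ} {c : ℝ}
    (h : ∑ i ∈ s, (a i - c) * (2 : ℝ) ^ (-(β * E i)) = 0) :
    ∑ i ∈ s, a i * gibbs s β E i = c := by
  rw [sum_sub_mul_rpow_eq β E hs, mul_eq_zero, sub_eq_zero] at h
  exact h.resolve_right (partitionFunction_pos β E hs).ne'

lemma sum_mul_gibbs_lt_of_sum_sub_mul_rpow_neg (hs : s.Nonempty) {a : ι → ℝ} {c : ℝ}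
    (h : ∑ i ∈ s, (a i - c) * (2 : ℝ) ^ (-(β * E i)) < 0) :
    ∑ i ∈ s, a i * gibbs s β E i < c := by
  rw [sum_sub_mul_rpow_eq β E hs] at h
  exact sub_neg.mp (neg_of_mul_neg_left h (partitionFunction_pos β E hs).le)

lemma sum_mul_logb_gibbs_le (hs : s.Nonempty) {q : ι → ℝ} (hq : ∀ i ∈ s, 0 ≤ q i)
    (hq_sum : ∑ i ∈ s, q i = 1) (hq_mean : ∑ i ∈ s, E i * q i = ∑ i ∈ s, E i * gibbs s β E i) :
    ∑ i ∈ s, gibbs s β E i * logb 2 (gibbs s β E i) ≤ ∑ i ∈ s, q i * logb 2 (q i) :=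
  calc ∑ i ∈ s, gibbs s β E i * logb 2 (gibbs s β E i)
      = ∑ i ∈ s, q i * logb 2 (gibbs s β E i) := by
        rw [sum_mul_logb_gibbs β E hs, sum_mul_logb_gibbs β E hs, hq_mean, hq_sum,
          sum_gibbs β E hs]
    _ ≤ ∑ i ∈ s, q i * logb 2 (q i) :=
        sum_mul_logb_le_sum_mul_logb one_lt_two (fun i _ ↦ gibbs_pos β E hs i) hq
          (by rw [sum_gibbs β E hs, hq_sum])

end Gibbs

theorem lemma1_case1_optimal_general
    (M : ℕ) (hM : 1 ≤ M) (Δ : ℝ)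
    (RFEC : ℝ) (hRpos : 0 < RFEC)
    (W : ℕ → ℝ) (Ru Rbf : ℝ) (Pj : ℝ)
    (D : ℝ) (hD : D = (1 - RFEC) * Ru - Rbf)
    (η : ℝ)
    (pstar : ℕ → ℝ)
    (hpstar : ∀ i, pstar i =
      (2 : ℝ) ^ (-(η * Δ * (i : ℝ))) /
        ∑ i' ∈ Finset.Icc 1 M, (2 : ℝ) ^ (-(η * Δ * (i' : ℝ))))
    (hc1p : ∑ i ∈ Finset.Icc 1 M,
      (RFEC * Δ * (i : ℝ) - Pj) * (2 : ℝ) ^ (-(η * Δ * (i : ℝ))) = 0)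
    (hc1r : ∑ i ∈ Finset.Icc 1 M,
      (RFEC * W i - D) * (2 : ℝ) ^ (-(η * Δ * (i : ℝ))) < 0) :
    -- feasibility: power equality
    (RFEC * ∑ i ∈ Finset.Icc 1 M, Δ * (i : ℝ) * pstar i = Pj) ∧
    -- feasibility: strict rate constraint T(pstar) < Φ(pstar) - Rbf
    (-RFEC * ∑ i ∈ Finset.Icc 1 M, pstar i * Real.logb 2 (pstar i)
      < (RFEC * (-(∑ i ∈ Finset.Icc 1 M, pstar i * Real.logb 2 (pstar i))
          - ∑ i ∈ Finset.Icc 1 M, pstar i * W i) + (1 - RFEC) * Ru) - Rbf) ∧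
    -- optimality among all feasible probability vectors
    (∀ q : ℕ → ℝ,
      (∀ i ∈ Finset.Icc 1 M, 0 ≤ q i) →
      (∑ i ∈ Finset.Icc 1 M, q i = 1) →
      (RFEC * ∑ i ∈ Finset.Icc 1 M, Δ * (i : ℝ) * q i = Pj) →
      (-RFEC * ∑ i ∈ Finset.Icc 1 M, q i * Real.logb 2 (q i)
        ≤ (RFEC * (-(∑ i ∈ Finset.Icc 1 M, q i * Real.logb 2 (q i))
            - ∑ i ∈ Finset.Icc 1 M, q i * W i) + (1 - RFEC) * Ru) - Rbf) →
      -RFEC * ∑ i ∈ Finset.Icc 1 M, q i * Real.logb 2 (q i)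
        ≤ -RFEC * ∑ i ∈ Finset.Icc 1 M, pstar i * Real.logb 2 (pstar i)) := by
  set s := Icc 1 M
  have hs : s.Nonempty := nonempty_Icc.mpr hM
  have hp : pstar = gibbs s η (fun i : ℕ ↦ Δ * i) :=
    funext fun i ↦ by simp only [hpstar, gibbs, partitionFunction, mul_assoc]
  simp only [mul_assoc] at hc1p hc1r
  have hpow : RFEC * ∑ i ∈ s, Δ * (i : ℝ) * pstar i = Pj := by
    rw [← sum_mul_gibbs_eq_of_sum_sub_mul_rpow_eq_zero η _ hs (a := fun i ↦ RFEC * (Δ * i)) hc1p,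
      hp, mul_sum]
    simp only [mul_assoc]
  have hrate : RFEC * ∑ i ∈ s, pstar i * W i < D := by
    rw [mul_sum, hp]
    convert sum_mul_gibbs_lt_of_sum_sub_mul_rpow_neg η _ hs (a := fun i ↦ RFEC * W i) hc1r
      using 2 with i
    ring
  refine ⟨hpow, by linarith, fun q hq hq_sum hq_pow _ ↦ ?_⟩
  have hq_mean : ∑ i ∈ s, Δ * (i : ℝ) * q i = ∑ i ∈ s, Δ * (i : ℝ) * pstar i :=
    mul_left_cancel₀ hRpos.ne' (hq_pow.trans hpow.symm)
  rw [hp] at hq_mean ⊢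
  rw [neg_mul, neg_mul, neg_le_neg_iff]
  exact mul_le_mul_of_nonneg_left (sum_mul_logb_gibbs_le η _ hs hq hq_sum hq_mean) hRpos.le

/-- **Lemma 1, case 1 (Gibbs distribution) of the convexified rate-adaptation problem.**
Under the conditions `c1p` (power) and `c1r` (strict rate inequality), the Gibbs
probability vector `pstar i = 2^{-ηΔi} / ∑ 2^{-ηΔi'}` is feasible (power equality and
strict rate constraint) and optimal: any feasible probability vector `q` has
transmission rate `T(q) ≤ T(pstar)`. -/
theorem lemma1_case1_optimal
    (M : ℕ) (hM : 1 ≤ M) (Δ : ℝ) (hΔ : 0 < Δ)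
    (RFEC : ℝ) (hRpos : 0 < RFEC) (hRle : RFEC ≤ 1)
    (W : ℕ → ℝ) (Ru Rbf : ℝ) (Pj : ℝ) (hPj : 0 < Pj)
    (D : ℝ) (hD : D = (1 - RFEC) * Ru - Rbf)
    (η : ℝ) (hη : 0 < η)
    (pstar : ℕ → ℝ)
    (hpstar : ∀ i, pstar i =
      (2 : ℝ) ^ (-(η * Δ * (i : ℝ))) /
        ∑ i' ∈ Finset.Icc 1 M, (2 : ℝ) ^ (-(η * Δ * (i' : ℝ))))
    (hc1p : ∑ i ∈ Finset.Icc 1 M,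
      (RFEC * Δ * (i : ℝ) - Pj) * (2 : ℝ) ^ (-(η * Δ * (i : ℝ))) = 0)
    (hc1r : ∑ i ∈ Finset.Icc 1 M,
      (RFEC * W i - D) * (2 : ℝ) ^ (-(η * Δ * (i : ℝ))) < 0) :
    -- feasibility: power equality
    (RFEC * ∑ i ∈ Finset.Icc 1 M, Δ * (i : ℝ) * pstar i = Pj) ∧
    -- feasibility: strict rate constraint T(pstar) < Φ(pstar) - Rbf
    (-RFEC * ∑ i ∈ Finset.Icc 1 M, pstar i * Real.logb 2 (pstar i)
      < (RFEC * (-(∑ i ∈ Finset.Icc 1 M, pstar i * Real.logb 2 (pstar i))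
          - ∑ i ∈ Finset.Icc 1 M, pstar i * W i) + (1 - RFEC) * Ru) - Rbf) ∧
    -- optimality among all feasible probability vectors
    (∀ q : ℕ → ℝ,
      (∀ i ∈ Finset.Icc 1 M, 0 ≤ q i) →
      (∑ i ∈ Finset.Icc 1 M, q i = 1) →
      (RFEC * ∑ i ∈ Finset.Icc 1 M, Δ * (i : ℝ) * q i = Pj) →
      (-RFEC * ∑ i ∈ Finset.Icc 1 M, q i * Real.logb 2 (q i)
        ≤ (RFEC * (-(∑ i ∈ Finset.Icc 1 M, q i * Real.logb 2 (q i))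
            - ∑ i ∈ Finset.Icc 1 M, q i * W i) + (1 - RFEC) * Ru) - Rbf) →
      -RFEC * ∑ i ∈ Finset.Icc 1 M, q i * Real.logb 2 (q i)
        ≤ -RFEC * ∑ i ∈ Finset.Icc 1 M, pstar i * Real.logb 2 (pstar i)) :=
  lemma1_case1_optimal_general M hM Δ RFEC hRpos W Ru Rbf Pj D hD η pstar hpstar hc1p hc1r
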